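/- Fix X ∈ {B,C,D} and a positive integer n, and let w ∈ W^X_n. Choose integers i and k with i < k and 1 ≤ k ≤ n such that t := t_{ik} is a reflection of W^X_∞ (i.e. i ≠ −k, and i ≠ 0 when X = D) and ℓ^X(wt) = ℓ^X(w)+1. Then: (a) wt ∈ W^X_{n+1}; (b) wt(k) < w(k); (c) Des(wt) ⊆ Des(w) ∪ {k−1}, where Des(u) = {i > 0 : u(i) > u(i+1)}. Moreover, if wt ∉ W^X_n, then additionally: (d) i = −n−1; and (e) for every integer j with i < j < k such that t_{jk} is a reflection of W^X_∞, one has ℓ^X(wt·t_{jk}) ≠ ℓ^X(wt)+1. -/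

import Mathlib

open scoped Classical

noncomputable section

/-! ## Signed permutations -/

/-- We model signed permutations (and ordinary permutations of the positive
integers) inside the group `Equiv.Perm ℤ`. -/
abbrev SPerm := Equiv.Perm ℤ

/-- `w` is a signed permutation: `w(-i) = -w(i)` and finite support. -/
def IsSgn (w : SPerm) : Prop :=
  (∀ i : ℤ, w (-i) = -(w i)) ∧ Set.Finite {i : ℤ | w i ≠ i}

/-- The classical types B, C, D. -/
inductive XType | B | C | D
deriving DecidableEq

/-- `ℓ0(w)`: the number of positive `i` with `w i < 0`. -/
def negCount (w : SPerm) : ℕ := Set.ncard {i : ℤ | 0 < i ∧ w i < 0}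

/-- Membership in `W^X_∞`. -/
def IsW : XType → SPerm → Prop
  | XType.B, w => IsSgn w
  | XType.C, w => IsSgn w
  | XType.D, w => IsSgn w ∧ Even (negCount w)

/-- Membership in `W^X_n`: an element of `W^X_∞` fixing every `i` with `|i| > n`. -/
def IsWn (X : XType) (n : ℕ) (w : SPerm) : Prop :=
  IsW X w ∧ ∀ i : ℤ, (n : ℤ) < |i| → w i = i

/-- `inv(w)`: the number of pairs `(i,j)` of integers with `i < j` and `w i > w j`. -/
def invP (w : SPerm) : ℕ := Set.ncard {p : ℤ × ℤ | p.1 < p.2 ∧ w p.2 < w p.1}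

/-- The Coxeter length functions `ℓ^B = ℓ^C = (inv + ℓ0)/2`, `ℓ^D = (inv - ℓ0)/2`. -/
def lenX : XType → SPerm → ℕ
  | XType.B, w => (invP w + negCount w) / 2
  | XType.C, w => (invP w + negCount w) / 2
  | XType.D, w => (invP w - negCount w) / 2

/-- The element `t_{i,j}` exchanging `i ↔ j` and `-i ↔ -j`; in particular
`t_{0,k}` exchanges `-k ↔ k`, and `t_{j,j} = t_{-j,j} = 1`. -/
def tt (i j : ℤ) : SPerm :=
  if i = 0 then Equiv.swap (-j) j
  else if j = 0 then Equiv.swap (-i) i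
  else if i = j ∨ i = -j then 1
  else Equiv.swap i j * Equiv.swap (-i) (-j)

/-- The simple generators: `st 0 = t_{0,1}`, `st (-1) = t_{-1,2}`,
`st i = t_{i,i+1}` for `i ≥ 1`. -/
def st (a : ℤ) : SPerm := if a = -1 then tt (-1) 2 else tt a (a + 1)

/-- One step of the Demazure product: multiply by `st a` if this increases
length by one, else do nothing. -/
def demStep (X : XType) (w : SPerm) (a : ℤ) : SPerm :=
  if lenX X (w * st a) = lenX X w + 1 then w * st a else w

/-- Demazure product of `w` with the word `l` of simple generators. -/
def demFold (X : XType) (w : SPerm) (l : List ℤ) : SPerm := l.foldl (demStep X) w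

/-- Letters allowed in Hecke words of type `X`. -/
def allowedLetter : XType → ℤ → Prop
  | XType.B, a => 0 ≤ a
  | XType.C, a => 0 ≤ a
  | XType.D, a => a = -1 ∨ 1 ≤ a

/-- `l ∈ H^X(w)`: a Hecke word for `w` of type `X`. -/
def HeckeWord (X : XType) (w : SPerm) (l : List ℤ) : Prop :=
  (∀ a ∈ l, allowedLetter X a) ∧ demFold X 1 l = w

/-- `o^X(a)`. -/
def oX : XType → List ℤ → ℕ
  | XType.B, l => l.count 0
  | XType.C, _ => 0
  | XType.D, l => l.count (-1) + l.count 1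

/-- `b ∈ C^X(a)`: a compatible sequence for the word `a`. -/
def CompatX (X : XType) (a : List ℤ) (b : List ℕ) : Prop :=
  b.length = a.length ∧ (∀ x ∈ b, 0 < x) ∧ b.Pairwise (· ≤ ·) ∧
  (∀ i : ℕ, 0 < i → i + 1 < a.length →
    |a.getD (i-1) 0| ≤ |a.getD i 0| → |a.getD (i+1) 0| ≤ |a.getD i 0| →
    b.getD (i-1) 0 < b.getD (i+1) 0) ∧
  (X = XType.B → ∀ i : ℕ, i + 1 < a.length → a.getD i 0 = 0 → a.getD (i+1) 0 = 0 →
    b.getD i 0 < b.getD (i+1) 0) ∧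
  (X = XType.D → ∀ i : ℕ, i + 1 < a.length →
    a.getD i 0 = a.getD (i+1) 0 → (a.getD i 0 = -1 ∨ a.getD i 0 = 1) →
    b.getD i 0 < b.getD (i+1) 0)

/-- `γ(a,b)`: the number of `i` with `a_i = a_{i+1}` and `b_i = b_{i+1}`. -/
def gammaC (a : List ℤ) (b : List ℕ) : ℕ :=
  (List.range (a.length - 1)).countP
    (fun i => decide (a.getD i 0 = a.getD (i+1) 0 ∧ b.getD i 0 = b.getD (i+1) 0))

/-- `ℤ[β]`, with `β = Polynomial.X`. -/
abbrev PolyB := Polynomial ℤ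

/-- The K-Stanley symmetric function `F^X_w(z) ∈ ℤ[β]⟦z_1,z_2,...⟧`
(the variable `z_i` has index `i ≥ 1`; index `0` is unused), defined
coefficientwise: the coefficient of a monomial is the (finite) sum of the
contributions `2^{|b|-γ(a,b)-o^X(a)} β^{ℓ(a)-ℓ^X(w)}` over all pairs of a
Hecke word `a ∈ H^X(w)` and compatible sequence `b ∈ C^X(a)` with `z_b`
equal to the monomial. -/
def KSF (X : XType) (w : SPerm) : MvPowerSeries ℕ PolyB :=
  fun d => ∑ᶠ (p : List ℤ × List ℕ)
    (_ : HeckeWord X w p.1 ∧ CompatX X p.1 p.2 ∧ ∀ k : ℕ, d k = p.2.count k),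
    (2 : PolyB) ^ (p.2.dedup.length - gammaC p.1 p.2 - oX X p.1) *
      Polynomial.X ^ (p.1.length - lenX X w)

/-- A signed permutation is Grassmannian if `w(1) < w(2) < ⋯`. -/
def IsGrassmannian (w : SPerm) : Prop := ∀ i : ℤ, 0 < i → w i < w (i + 1)

/-- The descent set `Des(w) = {i > 0 : w(i) > w(i+1)}` (as a set of naturals). -/
def DesSet (w : SPerm) : Set ℕ := {i : ℕ | 0 < i ∧ w ((i : ℤ) + 1) < w (i : ℤ)}

/-- The last descent `LD(w) = max({0} ∪ Des(w))`. -/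
def LD (w : SPerm) : ℕ := sSup (DesSet w)

/-- The partial order `≺_LD`. -/
def precLD (u w : SPerm) : Prop :=
  LD u < LD w ∨ (0 < LD u ∧ LD u = LD w ∧ u (LD u : ℤ) < w (LD w : ℤ))

/-- `IncSteps f u ts` : successive right multiplications of `u` by the
elements of `ts` each increase `f` by exactly one. -/
def IncSteps (f : SPerm → ℕ) : SPerm → List SPerm → Prop
  | _, [] => True
  | u, t :: ts => f (u * t) = f u + 1 ∧ IncSteps f (u * t) ts

/-! ## Strict partitions and K-theoretic Schur P- and Q-functions -/

section

/-- A strict partition, encoded as a strictly decreasing list of positive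
integers. -/
def StrictPart (l : List ℕ) : Prop := l.Pairwise (· > ·) ∧ ∀ x ∈ l, 0 < x

/-- A partition (weakly decreasing list of positive integers). -/
def Partn (l : List ℕ) : Prop := l.Pairwise (· ≥ ·) ∧ ∀ x ∈ l, 0 < x

/-- Membership of the (1-based) box `p = (i,j)` in the shifted diagram `SD_l`. -/
def inSD (l : List ℕ) (p : ℕ × ℕ) : Prop :=
  1 ≤ p.1 ∧ p.1 ≤ l.length ∧ p.1 ≤ p.2 ∧ p.2 < p.1 + l.getD (p.1 - 1) 0

/-- `mu ⊆ lam`, i.e. `SD_mu ⊆ SD_lam`. -/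
def subShape (mu lam : List ℕ) : Prop := ∀ p, inSD mu p → inSD lam p

/-- Membership in the skew shifted diagram `SD_{lam/mu}`. -/
def inSkew (lam mu : List ℕ) (p : ℕ × ℕ) : Prop := inSD lam p ∧ ¬ inSD mu p

/-- A set-valued shifted tableau of shape `lam/mu`:  a finite nonempty set of
letters in each box of the skew shape, the empty set elsewhere.  The primed
alphabet `1' < 1 < 2' < 2 < ⋯` is encoded in `ℕ` by `k ↦ 2k` and `k' ↦ 2k-1`
(so primed letters are odd codes, and the order on codes is the alphabet
order). -/
def IsSVT (lam mu : List ℕ) (T : ℕ × ℕ → Finset ℕ) : Prop :=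
  (∀ p, (T p).Nonempty ↔ inSkew lam mu p) ∧ (∀ p, ∀ v ∈ T p, 0 < v)

/-- Semistandardness of a set-valued shifted tableau. -/
def IsSSVT (lam mu : List ℕ) (T : ℕ × ℕ → Finset ℕ) : Prop :=
  IsSVT lam mu T ∧
  (∀ i j : ℕ, inSkew lam mu (i, j) → inSkew lam mu (i, j+1) →
    (∀ u ∈ T (i, j), ∀ v ∈ T (i, j+1), u ≤ v) ∧
    (∀ v ∈ T (i, j), v ∈ T (i, j+1) → Even v)) ∧
  (∀ i j : ℕ, inSkew lam mu (i, j) → inSkew lam mu (i+1, j) →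
    (∀ u ∈ T (i, j), ∀ v ∈ T (i+1, j), u ≤ v) ∧
    (∀ v ∈ T (i, j), v ∈ T (i+1, j) → Odd v))

/-- `|T|`: total number of letters in `T`. -/
def tabSize (T : ℕ × ℕ → Finset ℕ) : ℕ := ∑ᶠ p : ℕ × ℕ, (T p).card

/-- The exponent of `z_k` in `z^T`: the number of boxes containing the letter
`k` (code `2k`) plus the number containing `k'` (code `2k-1`). -/
def tabWt (T : ℕ × ℕ → Finset ℕ) (k : ℕ) : ℕ :=
  Set.ncard {p : ℕ × ℕ | 2 * k ∈ T p} + Set.ncard {p : ℕ × ℕ | 2 * k - 1 ∈ T p}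

/-- The K-theoretic Schur P-function `GP_{lam/mu}(z) ∈ ℤ[β]⟦z_1,z_2,...⟧`,
defined coefficientwise as a tableau generating function. -/
def GPs (lam mu : List ℕ) : MvPowerSeries ℕ PolyB :=
  fun d => ∑ᶠ (T : ℕ × ℕ → Finset ℕ)
    (_ : IsSSVT lam mu T ∧
      (∀ i : ℕ, inSkew lam mu (i, i) → ∀ v ∈ T (i, i), Even v) ∧
      (∀ k : ℕ, d k = tabWt T k)),
    (Polynomial.X : PolyB) ^ (tabSize T - (lam.sum - mu.sum))

/-- The K-theoretic Schur Q-function `GQ_{lam/mu}(z) ∈ ℤ[β]⟦z_1,z_2,...⟧`. -/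
def GQs (lam mu : List ℕ) : MvPowerSeries ℕ PolyB :=
  fun d => ∑ᶠ (T : ℕ × ℕ → Finset ℕ)
    (_ : IsSSVT lam mu T ∧ (∀ k : ℕ, d k = tabWt T k)),
    (Polynomial.X : PolyB) ^ (tabSize T - (lam.sum - mu.sum))

end

/-! ## Type A: the symmetric group and double Grothendieck polynomials

We identify `S_∞` (permutations of the positive integers with finite support)
with the subgroup `W^A_∞` of signed permutations preserving the positive
integers; under this identification the Coxeter length of type A equals
`ℓ^B`, and the transposition `(i,j)` of positive integers corresponds to
`tt i j`. -/

section

/-- Membership in `S_∞ = W^A_∞`. -/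
def IsAperm (w : SPerm) : Prop := IsSgn w ∧ ∀ i : ℤ, 0 < i → 0 < w i

/-- The type A Coxeter length. -/
def lenA (w : SPerm) : ℕ := lenX XType.B w

/-- The polynomial ring `ℤ[β][x_1,x_2,...,y_1,y_2,...]`:  the variable
`Sum.inl i` is `x_i` and `Sum.inr i` is `y_i` (for `i ≥ 1`; index 0 unused). -/
abbrev MvP := MvPolynomial (ℕ ⊕ ℕ) PolyB

def xV (i : ℕ) : MvP := MvPolynomial.X (Sum.inl i)
def yV (i : ℕ) : MvP := MvPolynomial.X (Sum.inr i)
def βM : MvP := MvPolynomial.C Polynomial.X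

/-- `w` is the reverse permutation `n ⋯ 3 2 1 ∈ S_n`. -/
def IsRevA (n : ℕ) (w : SPerm) : Prop :=
  IsAperm w ∧ (∀ i : ℤ, 1 ≤ i → i ≤ (n : ℤ) → w i = (n : ℤ) + 1 - i) ∧
  (∀ i : ℤ, (n : ℤ) < i → w i = i)

/-- Exchange of the variables `x_i` and `x_{i+1}`. -/
def swapXvar (i : ℕ) (f : MvP) : MvP :=
  MvPolynomial.rename (Equiv.swap (Sum.inl i : ℕ ⊕ ℕ) (Sum.inl (i+1))) f

/-- `G` is the family of double Grothendieck polynomials `𝔊_w(x;y)`: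
it takes the prescribed product value on each reverse permutation, and
satisfies the divided-difference recursion `𝔊_{w s_i} = π_i 𝔊_w` whenever
`w(i) > w(i+1)` (stated multiplied through by `x_i - x_{i+1}`). -/
def GrothFamily (G : SPerm → MvP) : Prop :=
  (∀ n : ℕ, ∀ w : SPerm, IsRevA n w →
    G w = ∏ p ∈ Finset.filter
        (fun p : ℕ × ℕ => 1 ≤ p.1 ∧ 1 ≤ p.2 ∧ p.1 + p.2 ≤ n)
        (Finset.range (n+1) ×ˢ Finset.range (n+1)),
      (xV p.1 + yV p.2 + βM * xV p.1 * yV p.2)) ∧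
  (∀ w : SPerm, IsAperm w → ∀ i : ℕ, 0 < i → w ((i : ℤ) + 1) < w (i : ℤ) →
    (xV i - xV (i+1)) * G (w * st (i : ℤ)) =
      (1 + βM * xV (i+1)) * G w - (1 + βM * xV i) * swapXvar i (G w))

/-! ## Power series rings -/

/-- `ℤ[β]⟦z⟧`. -/
abbrev PS1 := MvPowerSeries ℕ PolyB
/-- `ℤ[β]⟦x;y⟧`: `Sum.inl i = x_i`, `Sum.inr i = y_i`. -/
abbrev PS2 := MvPowerSeries (ℕ ⊕ ℕ) PolyB
/-- `ℤ[β]⟦x;y;z⟧`: `Sum.inl i = x_i`, `Sum.inr (Sum.inl i) = y_i`,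
`Sum.inr (Sum.inr i) = z_i`. -/
abbrev PS3 := MvPowerSeries (ℕ ⊕ ℕ ⊕ ℕ) PolyB

/-- Renaming of variables of a formal power series along a (variable-to-
variable, injective) map `g`. -/
def renamePS {σ τ : Type} (g : σ → τ) (f : MvPowerSeries σ PolyB) :
    MvPowerSeries τ PolyB :=
  fun e => if h : ∃ d : σ →₀ ℕ, Finsupp.mapDomain g d = e then f h.choose else 0

/-- The substitution sending `z_{2i-1}` to `z_i` (first alphabet) and
`z_{2i}` to `z'_i` (second alphabet): evaluation at the disjoint union of two
alphabets. -/
def dblVar : ℕ → ℕ ⊕ ℕ := fun k => if k % 2 = 1 then Sum.inl ((k+1)/2) else Sum.inr (k/2)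

def toPS2 : MvP →+* PS2 := MvPolynomial.coeToMvPowerSeries.ringHom
def X2 (i : ℕ) : PS2 := MvPowerSeries.X (Sum.inl i)
def Y2 (i : ℕ) : PS2 := MvPowerSeries.X (Sum.inr i)
def βC2 : PS2 := MvPowerSeries.C (σ := ℕ ⊕ ℕ) (R := PolyB) Polynomial.X
/-- The inverse of `1 + β y_m` in `ℤ[β]⟦x;y⟧`. -/
def yInv2 (m : ℕ) : PS2 := MvPowerSeries.invOfUnit (1 + βC2 * Y2 m) 1

def X3 (i : ℕ) : PS3 := MvPowerSeries.X (Sum.inl i)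
def Y3 (i : ℕ) : PS3 := MvPowerSeries.X (Sum.inr (Sum.inl i))
def βC3 : PS3 := MvPowerSeries.C (σ := ℕ ⊕ ℕ ⊕ ℕ) (R := PolyB) Polynomial.X
/-- The inverse of `1 + β y_m` in `ℤ[β]⟦x;y;z⟧`. -/
def yInv3 (m : ℕ) : PS3 := MvPowerSeries.invOfUnit (1 + βC3 * Y3 m) 1

/-- `y_c` for `c : ℤ`, with the convention `y_{-m} = -y_m/(1+βy_m)`. -/
def y3Of (c : ℤ) : PS3 :=
  if 0 ≤ c then Y3 c.toNat else - Y3 (-c).toNat * yInv3 (-c).toNat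

/-- `(1 + β y_c)⁻¹` for `c : ℤ` (with the convention above for `c < 0`). -/
def oneByInv3 (c : ℤ) : PS3 := MvPowerSeries.invOfUnit (1 + βC3 * y3Of c) 1

/-! ## Kirillov–Naruse double Grothendieck polynomials -/

/-- `𝔊_σ(y)`: the `x`-variables replaced by `y`'s, the `y`-variables set
to `0`, inside `ℤ[β]⟦x;y;z⟧`. -/
def GyMap : MvP →+* PS3 :=
  MvPolynomial.eval₂Hom (MvPowerSeries.C (σ := ℕ ⊕ ℕ ⊕ ℕ) (R := PolyB))
    (fun s => match s with
      | Sum.inl i => Y3 i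
      | Sum.inr _ => 0)

/-- `𝔊_τ(x)`: the `y`-variables set to `0`, inside `ℤ[β]⟦x;y;z⟧`. -/
def GxMap : MvP →+* PS3 :=
  MvPolynomial.eval₂Hom (MvPowerSeries.C (σ := ℕ ⊕ ℕ ⊕ ℕ) (R := PolyB))
    (fun s => match s with
      | Sum.inl i => X3 i
      | Sum.inr _ => 0)

/-- Embedding of `ℤ[β]⟦z⟧` into `ℤ[β]⟦x;y;z⟧`. -/
def zEmb (f : PS1) : PS3 := renamePS (fun k => Sum.inr (Sum.inr k)) f

/-- `σ⁻¹ ∘ u ∘ τ = w` for the Demazure product of `W^X_∞` (computed by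
folding Hecke words for `u` and `τ` starting from `σ⁻¹`; the result does not
depend on the chosen words). -/
def DemTriple (X : XType) (sg u tu w : SPerm) : Prop :=
  ∃ lu lt : List ℤ, HeckeWord X u lu ∧ HeckeWord X tu lt ∧
    demFold X sg⁻¹ (lu ++ lt) = w

/-- The Kirillov–Naruse double Grothendieck polynomial
`𝔊^X_w(x;y;z) = Σ_{σ⁻¹∘u∘τ = w} β^{ℓ(σ)+ℓ^X(u)+ℓ(τ)-ℓ^X(w)} 𝔊_σ(y) F^X_u(z) 𝔊_τ(x)`,
defined coefficientwise (each coefficient receives finitely many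
contributions); it depends on a choice `G` of the family of type A double
Grothendieck polynomials. -/
def KN (X : XType) (G : SPerm → MvP) (w : SPerm) : PS3 :=
  fun e => ∑ᶠ (t : SPerm × SPerm × SPerm)
    (_ : IsAperm t.1 ∧ IsW X t.2.1 ∧ IsAperm t.2.2 ∧ DemTriple X t.1 t.2.1 t.2.2 w),
    MvPowerSeries.coeff (R := PolyB) e
      (MvPowerSeries.C (σ := ℕ ⊕ ℕ ⊕ ℕ) (R := PolyB)
          (Polynomial.X ^ (lenA t.1 + lenX X t.2.1 + lenA t.2.2 - lenX X w)) *
        (GyMap (G t.1) * zEmb (KSF X t.2.1) * GxMap (G t.2.2)))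

end

/-! ## Stable Grothendieck functions of type A -/

section

/-- A type A Hecke word: letters are positive, fold to `w` under the
Demazure product. -/
def HeckeWordA (w : SPerm) (l : List ℤ) : Prop :=
  (∀ a ∈ l, 0 < a) ∧ demFold XType.B 1 l = w

/-- `b ∈ C(a)`: compatible sequences of type A. -/
def CompatA (a : List ℤ) (b : List ℕ) : Prop :=
  b.length = a.length ∧ (∀ x ∈ b, 0 < x) ∧ b.Pairwise (· ≤ ·) ∧
  ∀ i : ℕ, i + 1 < a.length → a.getD i 0 ≤ a.getD (i+1) 0 →
    b.getD i 0 < b.getD (i+1) 0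

/-- The stable (symmetric) Grothendieck function `G_w(z)`. -/
def GA (w : SPerm) : PS1 :=
  fun d => ∑ᶠ (p : List ℤ × List ℕ)
    (_ : HeckeWordA w p.1 ∧ CompatA p.1 p.2 ∧ ∀ k : ℕ, d k = p.2.count k),
    (Polynomial.X : PolyB) ^ (p.1.length - lenA w)

/-- Demazure product condition `u ∘ v = w` in `S_∞`. -/
def DemPairA (u v w : SPerm) : Prop :=
  ∃ lv : List ℤ, HeckeWordA v lv ∧ demFold XType.B u lv = w

/-- `max({0} ∪ {i > 0 : u(i) ≠ i})`. -/
def suppMax (u : SPerm) : ℕ := sSup {n : ℕ | 0 < n ∧ u (n : ℤ) ≠ (n : ℤ)}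

end

/-! ## The coefficient ring 𝔸 (localization of ℤ[β][y] at the 1+βyᵢ) -/

section

/-- `ℤ[β][y_1,y_2,...]`. -/
abbrev Ry := MvPolynomial ℕ+ PolyB

/-- The multiplicative set generated by the `1 + β y_i`, `i ≥ 1`. -/
def Sy : Submonoid Ry :=
  Submonoid.closure
    (Set.range fun i : ℕ+ => (1 + MvPolynomial.C Polynomial.X * MvPolynomial.X i : Ry))

/-- The ring `𝔸`. -/
abbrev Aloc := Localization Sy

/-- The polynomial ring `𝔸[x_1,x_2,...]`. -/
abbrev Ax := MvPolynomial ℕ+ Aloc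

/-- The canonical map `ℤ[β][x;y] → 𝔸[x]`. -/
def toAx : MvP →+* Ax :=
  MvPolynomial.eval₂Hom
    ((MvPolynomial.C : Aloc →+* Ax).comp
      ((algebraMap Ry Aloc).comp (MvPolynomial.C : PolyB →+* Ry)))
    (fun s => match s with
      | Sum.inl i => if h : 0 < i then MvPolynomial.X (⟨i, h⟩ : ℕ+) else 0
      | Sum.inr i => if h : 0 < i then
          MvPolynomial.C (algebraMap Ry Aloc (MvPolynomial.X (⟨i, h⟩ : ℕ+))) else 0)

/-- Homogeneity in `ℤ[β][y]` for the grading `deg β = -1`, `deg y_i = 1`. -/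
def IsHomogRy (p : Ry) (d : ℤ) : Prop :=
  ∀ (m : ℕ+ →₀ ℕ) (a : ℕ), (MvPolynomial.coeff m p).coeff a ≠ 0 →
    (m.sum fun _ e => (e : ℤ)) - (a : ℤ) = d

/-- Homogeneity in `𝔸` of degree `d`: the element can be written with a
homogeneous numerator of degree `d` and a (degree zero) denominator in `Sy`. -/
def IsHomogA (x : Aloc) (d : ℤ) : Prop :=
  ∃ (p : Ry) (s : Sy), IsHomogRy p d ∧ IsHomogRy (s : Ry) 0 ∧
    x * algebraMap Ry Aloc (s : Ry) = algebraMap Ry Aloc p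

/-- The subring `𝔸^{(n)}` generated by `β`, by `y_1,…,y_{n-1}` and by the
inverses of `1+βy_1,…,1+βy_{n-1}`. -/
def AnSub (n : ℕ) : Subring Aloc :=
  Subring.closure
    ({algebraMap Ry Aloc (MvPolynomial.C Polynomial.X)} ∪
     {x | ∃ i : ℕ+, (i : ℕ) < n ∧ x = algebraMap Ry Aloc (MvPolynomial.X i)} ∪
     {x | ∃ i : ℕ+, (i : ℕ) < n ∧
        x * algebraMap Ry Aloc
          (1 + MvPolynomial.C Polynomial.X * MvPolynomial.X i : Ry) = 1})

end

/-! ## Transition chains -/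

section

/-- The list of reflections of a transition chain `γ = (δ; j_1 < ⋯ < j_r)`
with target column `k`: first (if `δ`) the reflection `t_{0,k}`, then the
reflections `t_{j_1,k}, …, t_{j_r,k}`. -/
def stepsR (k : ℕ) (γ : Bool × List ℤ) : List SPerm :=
  (if γ.1 then [tt 0 (k : ℤ)] else []) ++ γ.2.map (fun j => tt j (k : ℤ))

/-- Validity of the transition chain `γ = (δ; j_1 < ⋯ < j_r)` starting at
`w`, with target column `k`: `δ` only in type B, `j`'s increasing and `< k`,
`j_i ≠ -k`, `j_i ≠ 0` in type D, and each step increases `ℓ^X` by one. -/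
def chainValidR (X : XType) (w : SPerm) (k : ℕ) (γ : Bool × List ℤ) : Prop :=
  (γ.1 = true → X = XType.B) ∧ γ.2.Pairwise (· < ·) ∧
  (∀ j ∈ γ.2, j < (k : ℤ) ∧ j ≠ -(k : ℤ) ∧ (X = XType.D → j ≠ 0)) ∧
  IncSteps (lenX X) w (stepsR k γ)

/-- The endpoint of a chain. -/
def endR (w : SPerm) (k : ℕ) (γ : Bool × List ℤ) : SPerm := w * (stepsR k γ).prod

/-- The number of steps `δ + r` of a chain. -/
def lenR (γ : Bool × List ℤ) : ℕ := (if γ.1 then 1 else 0) + γ.2.length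

end

/-! ## Unimodal factorizations -/

section

/-- `b ∈ U(a)`: unimodal factorizations of the word `a`. -/
def UFact (a b : List ℤ) : Prop :=
  b.length = a.length ∧ (∀ x ∈ b, x ≠ 0) ∧
  b.Pairwise (fun m n => |m| < |n| ∨ (|m| = |n| ∧ m ≤ n)) ∧
  ∀ i : ℕ, i + 1 < b.length → b.getD i 0 = b.getD (i+1) 0 →
    (b.getD i 0 < 0 → |a.getD (i+1) 0| < |a.getD i 0|) ∧
    (0 < b.getD i 0 → |a.getD i 0| < |a.getD (i+1) 0|)

/-- `b ∈ U^X(a)`. -/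
def UFactX (X : XType) (a b : List ℤ) : Prop :=
  UFact a b ∧
  (X = XType.B → ∀ i : ℕ, i < b.length → a.getD i 0 = 0 → 0 < b.getD i 0) ∧
  (X = XType.D → ∀ i : ℕ, i < b.length →
    (a.getD i 0 = -1 ∨ a.getD i 0 = 1) → 0 < b.getD i 0)

end

/-! ## Reading words of skew shifted shapes -/

section

/-- The row-by-row reading word of the filling of `SD_{lam/mu}` placing
`j - i` in box `(i,j)`. -/
def aWord (lam mu : List ℕ) : List ℤ :=
  (List.range lam.length).flatMap (fun r =>
    (List.range (lam.getD r 0 - mu.getD r 0)).map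
      (fun s => ((mu.getD r 0 + s : ℕ) : ℤ)))

/-- The row-by-row reading word of the filling of `SD_{lam/mu}` placing
`j - i + 1` in each box `(i,j)` with `i ≠ j` and `(-1)^i` in each diagonal
box `(i,i)`. -/
def bWord (lam mu : List ℕ) : List ℤ :=
  (List.range lam.length).flatMap (fun r =>
    (List.range (lam.getD r 0 - mu.getD r 0)).map
      (fun s => if mu.getD r 0 + s = 0 then (-1 : ℤ) ^ (r + 1)
        else ((mu.getD r 0 + s : ℕ) : ℤ) + 1))

end

end

/-! Write `t_{ik} = (i k)(-k -i)` for `i ≠ 0` and `t_{0k} = (-k k)`. Right multiplication by a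
transposition `(a b)` with `u a < u b` adds at least `1 + 2 c` inversions, where `c` counts the
`j` strictly between `a` and `b` with `u j` strictly between `u a` and `u b`. Since
`inv = ℓ0 + 2 ℓ^D` for signed permutations, this gives, whenever `w i < w k`,
`ℓ^X(w t_{ik}) ≥ ℓ^X(w) + 1 + c` for `i ≠ 0` and `ℓ^X(w t_{0k}) ≥ ℓ^X(w) + 2`; applied to
`w t_{ik}` it shows that the length drops when `w k < w i`. So a step of length one forces
`w i < w k`, `i ≠ 0` and `c = 0`, from which (a)–(c) follow. If moreover `w t ∉ W^X_n`, then
`i = -n-1`, so `(w t)(k) = -n-1` is the least value of `w t` on `[-n-1, n+1]` and every further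
`t_{jk}` with `i < j < k` shortens `w t`.
-/

open Equiv Function

section Support

variable {u v w : SPerm}

lemma abs_apply_le_of_forall_lt_abs {M x : ℤ} (hw : ∀ x, M < |x| → w x = x) (hx : |x| ≤ M) :
    |w x| ≤ M := by
  by_contra h
  have := w.injective (hw (w x) (not_le.1 h))
  rw [this] at h
  exact h hx

lemma finite_support_mul (hu : {x | u x ≠ x}.Finite) (hv : {x | v x ≠ x}.Finite) :
    {x | (u * v) x ≠ x}.Finite := by
  refine (hu.union hv).subset fun x hx => ?_
  by_cases h : v x = x
  · left
    simpa [h] using hx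
  · exact Or.inr h

lemma finite_support_swap (a b : ℤ) : {x | swap a b x ≠ x}.Finite :=
  (Set.toFinite {a, b}).subset fun x hx => by
    by_contra h
    simp only [Set.mem_insert_iff, Set.mem_singleton_iff, not_or] at h
    exact hx (swap_apply_of_ne_of_ne h.1 h.2)

end Support

namespace IsSgn

variable {u v w : SPerm}

lemma map_zero (hw : IsSgn w) : w 0 = 0 := by
  have := hw.1 0
  simp only [neg_zero] at this
  omega

lemma mul (hu : IsSgn u) (hv : IsSgn v) : IsSgn (u * v) :=
  ⟨fun x => by simp only [Perm.mul_apply, hv.1 x, hu.1 (v x)], finite_support_mul hu.2 hv.2⟩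

end IsSgn

lemma IsW.isSgn {X : XType} {w : SPerm} (hw : IsW X w) : IsSgn w := by
  cases X
  exacts [hw, hw, hw.1]

section Reflection

variable {i k : ℤ}

lemma tt_zero_left (k : ℤ) : tt 0 k = swap (-k) k := if_pos rfl

lemma tt_apply_of_ne {x : ℤ} (hi : x ≠ i) (hk : x ≠ k) (hni : x ≠ -i) (hnk : x ≠ -k) :
    tt i k x = x := by
  unfold tt
  split_ifs <;> simp [swap_apply_of_ne_of_ne, *]

lemma isSgn_tt (i k : ℤ) : IsSgn (tt i k) := by
  refine ⟨fun x => ?_, ?_⟩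
  · unfold tt
    split_ifs <;> simp only [Perm.mul_apply, swap_apply_def, Perm.one_apply] <;> split_ifs <;> omega
  · refine (((((Set.finite_singleton (-k)).insert (-i)).insert k).insert i)).subset fun x hx => ?_
    contrapose! hx
    simp only [Set.mem_insert_iff, Set.mem_singleton_iff, not_or] at hx
    exact not_not.2 (tt_apply_of_ne hx.1 hx.2.1 hx.2.2.1 hx.2.2.2)

lemma tt_involutive (i k : ℤ) : Involutive (tt i k) := fun x => by
  unfold tt
  split_ifs <;> simp only [Perm.mul_apply, swap_apply_def, Perm.one_apply] <;> split_ifs <;> omega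

lemma tt_mul_self (i k : ℤ) : tt i k * tt i k = 1 :=
  Perm.ext (tt_involutive i k)

lemma tt_eq_swap_mul_swap (hik : i < k) (hk : 0 < k) (hineg : i ≠ -k) (h0 : i ≠ 0) :
    tt i k = swap i k * swap (-k) (-i) := by
  rw [tt, if_neg h0, if_neg hk.ne', if_neg (by omega), swap_comm (-k)]

lemma tt_apply_left (hik : i < k) (hk : 0 < k) (hineg : i ≠ -k) (h0 : i ≠ 0) :
    tt i k i = k := by
  rw [tt_eq_swap_mul_swap hik hk hineg h0]
  simp only [Perm.mul_apply, swap_apply_def]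
  split_ifs <;> omega

lemma tt_apply_right (hik : i < k) (hk : 0 < k) (hineg : i ≠ -k) (h0 : i ≠ 0) :
    tt i k k = i := by
  rw [tt_eq_swap_mul_swap hik hk hineg h0]
  simp only [Perm.mul_apply, swap_apply_def]
  split_ifs <;> omega

lemma tt_apply_neg_left (hik : i < k) (hk : 0 < k) (hineg : i ≠ -k) (h0 : i ≠ 0) :
    tt i k (-i) = -k := by
  rw [tt_eq_swap_mul_swap hik hk hineg h0]
  simp only [Perm.mul_apply, swap_apply_def]
  split_ifs <;> omega

lemma tt_apply_neg_right (hik : i < k) (hk : 0 < k) (hineg : i ≠ -k) (h0 : i ≠ 0) :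
    tt i k (-k) = -i := by
  rw [tt_eq_swap_mul_swap hik hk hineg h0]
  simp only [Perm.mul_apply, swap_apply_def]
  split_ifs <;> omega

end Reflection

section Inversions

variable {u σ : SPerm}

def invSet (u : SPerm) : Set (ℤ × ℤ) := {p | p.1 < p.2 ∧ u p.2 < u p.1}

lemma invP_eq_ncard (u : SPerm) : invP u = (invSet u).ncard := rfl

lemma invSet_finite (hu : {x | u x ≠ x}.Finite) : (invSet u).Finite := by
  obtain ⟨M, hM⟩ := (hu.image (fun x => |x|)).bddAbove
  have hfix : ∀ x, M < |x| → u x = x := fun x hx => by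
    by_contra h
    exact absurd (hM ⟨x, h, rfl⟩) (not_le.2 hx)
  have hcases : ∀ z, (|z| ≤ M ∧ |u z| ≤ M) ∨ (M < |z| ∧ u z = z) := fun z =>
    (le_or_gt |z| M).imp (fun h => ⟨h, abs_apply_le_of_forall_lt_abs hfix h⟩)
      (fun h => ⟨h, hfix z h⟩)
  refine ((Set.finite_Icc (-M) M).prod (Set.finite_Icc (-M) M)).subset ?_
  rintro ⟨x, y⟩ ⟨hxy, hinv⟩
  have hx := hcases x
  have hy := hcases y
  simp only [abs_le, lt_abs] at hx hy hxy hinv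
  simp only [Set.mem_prod, Set.mem_Icc]
  omega

lemma invSet_mul_diff (hσ : Involutive σ) :
    invSet (u * σ) \ invSet σ = Prod.map σ σ '' (invSet u \ invSet σ) := by
  rw [(hσ.prodMap hσ).image_eq_preimage_symm]
  ext ⟨x, y⟩
  simp only [invSet, Set.mem_sdiff, Set.mem_ofPred_eq, Set.mem_preimage, Prod.map_fst,
    Prod.map_snd, Perm.mul_apply, hσ x, hσ y, not_and, not_lt]
  have := (σ.injective.eq_iff : σ x = σ y ↔ x = y)
  omega

lemma invSet_mul_inter (hσ : Involutive σ) :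
    invSet (u * σ) ∩ invSet σ = (Prod.swap ∘ Prod.map σ σ) '' (invSet σ \ invSet u) := by
  have hinv : Involutive (Prod.swap ∘ Prod.map σ σ) := fun ⟨x, y⟩ => by simp [hσ x, hσ y]
  rw [hinv.image_eq_preimage_symm]
  ext ⟨x, y⟩
  simp only [invSet, Set.mem_sdiff, Set.mem_inter_iff, Set.mem_ofPred_eq, Set.mem_preimage,
    comp_apply, Prod.map_apply, Prod.swap_prod_mk, Perm.mul_apply, hσ x, hσ y, not_and, not_lt]
  have := (u.injective.eq_iff : u (σ x) = u (σ y) ↔ σ x = σ y)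
  have := (σ.injective.eq_iff : σ x = σ y ↔ x = y)
  omega

/-- The inversion set of `u * σ` is the symmetric difference of `invSet σ` and the image of
`invSet u` under `σ` (with the pairs reordered). -/
theorem invP_mul_add_two_mul (hσ : Involutive σ) (hu : (invSet u).Finite)
    (hσf : (invSet σ).Finite) :
    invP (u * σ) + 2 * (invSet u ∩ invSet σ).ncard = invP u + invP σ := by
  have hdiff := invSet_mul_diff (u := u) hσ
  have hinter := invSet_mul_inter (u := u) hσ
  have hfin : (invSet (u * σ)).Finite := by
    rw [← Set.sdiff_union_inter (invSet (u * σ)) (invSet σ), hdiff, hinter]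
    exact ((hu.sdiff).image _).union ((hσf.sdiff).image _)
  have hinj₁ : Injective (Prod.map σ σ) := σ.injective.prodMap σ.injective
  have hinj₂ : Injective (Prod.swap ∘ Prod.map σ σ) := Prod.swap_injective.comp hinj₁
  have e₁ := Set.ncard_inter_add_ncard_sdiff_eq_ncard (invSet (u * σ)) (invSet σ) hfin
  have e₂ := Set.ncard_inter_add_ncard_sdiff_eq_ncard (invSet u) (invSet σ) hu
  have e₃ := Set.ncard_inter_add_ncard_sdiff_eq_ncard (invSet σ) (invSet u) hσf
  rw [hdiff, hinter, Set.ncard_image_of_injective _ hinj₁,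
    Set.ncard_image_of_injective _ hinj₂] at e₁
  rw [Set.inter_comm] at e₃
  simp only [invP_eq_ncard]
  omega

end Inversions

section Swap

variable {u : SPerm} {a b : ℤ}

lemma invSet_swap (hab : a < b) :
    invSet (swap a b) = (a, ·) '' Set.Ioc a b ∪ (·, b) '' Set.Ioo a b := by
  ext ⟨x, y⟩
  simp only [invSet, Set.mem_ofPred_eq, Set.mem_union, Set.mem_image, Set.mem_Ioc, Set.mem_Ioo,
    Prod.mk.injEq, swap_apply_def]
  constructor
  · rintro ⟨hxy, h⟩
    by_cases hx : x = a
    · exact Or.inl ⟨y, ⟨by omega, by split_ifs at h <;> omega⟩, hx.symm, rfl⟩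
    · refine Or.inr ⟨x, ⟨?_, ?_⟩, rfl, ?_⟩ <;> split_ifs at h <;> omega
  · rintro (⟨z, hz, rfl, rfl⟩ | ⟨z, hz, rfl, rfl⟩) <;> refine ⟨by omega, ?_⟩ <;>
      split_ifs <;> omega

lemma invP_swap (hab : a < b) : invP (swap a b) = 2 * (Finset.Ioo a b).card + 1 := by
  have hdisj : Disjoint ((a, ·) '' Set.Ioc a b) ((·, b) '' Set.Ioo a b) := by
    rw [Set.disjoint_left]
    rintro _ ⟨y, -, rfl⟩ ⟨x, hx, hxy⟩
    simp only [Prod.mk.injEq] at hxy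
    exact absurd hx.1 (by omega)
  rw [invP_eq_ncard, invSet_swap hab, Set.ncard_union_eq hdisj,
    Set.ncard_image_of_injective _ (Prod.mk_right_injective a),
    Set.ncard_image_of_injective _ (Prod.mk_left_injective b),
    ← Finset.coe_Ioc, ← Finset.coe_Ioo, Set.ncard_coe_finset, Set.ncard_coe_finset,
    Int.card_Ioc, Int.card_Ioo]
  omega

noncomputable def between (u : SPerm) (a b : ℤ) : Finset ℤ :=
  {j ∈ Finset.Ioo a b | u a < u j ∧ u j < u b}

lemma ncard_inter_invSet_swap_add_card_between_le (hab : a < b) (hlt : u a < u b) :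
    (invSet u ∩ invSet (swap a b)).ncard + (between u a b).card ≤ (Finset.Ioo a b).card := by
  set outside := {j ∈ Finset.Ioo a b | ¬(u a < u j ∧ u j < u b)}
  have hsub : invSet u ∩ invSet (swap a b) ⊆
      (fun j => if u j < u a then (a, j) else (j, b)) '' (outside : Set ℤ) := by
    rw [invSet_swap hab]
    rintro _ ⟨⟨-, hinv⟩, ⟨y, hy, rfl⟩ | ⟨x, hx, rfl⟩⟩ <;> simp only at hinv
    · have hyb : y ≠ b := by rintro rfl; exact absurd hinv (not_lt.2 hlt.le)
      refine ⟨y, ?_, if_pos hinv⟩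
      simp only [outside, Finset.coe_filter, Finset.mem_Ioo, Set.mem_ofPred_eq]
      exact ⟨⟨hy.1, lt_of_le_of_ne hy.2 hyb⟩, fun h => by omega⟩
    · refine ⟨x, ?_, if_neg (by omega)⟩
      simp only [outside, Finset.coe_filter, Finset.mem_Ioo, Set.mem_ofPred_eq]
      exact ⟨hx, by omega⟩
  calc (invSet u ∩ invSet (swap a b)).ncard + (between u a b).card
      ≤ outside.card + (between u a b).card := by
        gcongr
        exact (Set.ncard_le_ncard hsub (Set.toFinite _)).trans
          ((Set.ncard_image_le (Set.toFinite _)).trans (Set.ncard_coe_finset _).le)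
    _ = (Finset.Ioo a b).card := by
        rw [add_comm]
        exact Finset.card_filter_add_card_filter_not _

theorem invP_add_le_invP_mul_swap (hu : (invSet u).Finite) (hab : a < b) (hlt : u a < u b) :
    invP u + 1 + 2 * (between u a b).card ≤ invP (u * swap a b) := by
  have h := invP_mul_add_two_mul (swap_apply_self a b) hu (invSet_swap hab ▸
    ((Set.finite_Ioc a b).image _).union ((Set.finite_Ioo a b).image _))
  have hbound := ncard_inter_invSet_swap_add_card_between_le hab hlt
  rw [invP_swap hab] at h
  omega

end Swap

section Parity

variable {w : SPerm}

/-- An inversion `(x, y)` of a signed permutation with `x + y = 0` is a sign change `w y < 0`,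
and `(x, y) ↦ (-y, -x)` pairs the inversions with `x + y > 0` with those with `x + y < 0`. -/
lemma IsSgn.invP_eq (hw : IsSgn w) : invP w = negCount w + 2 * lenX XType.D w := by
  set S := invSet w
  have hfin : S.Finite := invSet_finite hw.2
  have hzero : {p ∈ S | p.1 + p.2 = 0} = (fun j => (-j, j)) '' {i | 0 < i ∧ w i < 0} := by
    ext ⟨x, y⟩
    simp only [S, invSet, Set.mem_ofPred_eq, Set.mem_image, Prod.mk.injEq]
    constructor
    · rintro ⟨⟨hxy, h⟩, hs⟩
      obtain rfl : x = -y := by omega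
      exact ⟨y, ⟨by omega, by rw [hw.1] at h; omega⟩, rfl, rfl⟩
    · rintro ⟨j, ⟨hj, hwj⟩, rfl, rfl⟩
      exact ⟨⟨by omega, by rw [hw.1]; omega⟩, by omega⟩
  have hflip : Involutive (fun p : ℤ × ℤ => (-p.2, -p.1)) := fun p => by simp
  have hneg : {p ∈ S | p.1 + p.2 < 0} =
      (fun p : ℤ × ℤ => (-p.2, -p.1)) '' {p ∈ S | 0 < p.1 + p.2} := by
    rw [hflip.image_eq_preimage_symm]
    ext ⟨x, y⟩
    simp only [S, invSet, Set.mem_ofPred_eq, Set.mem_preimage, hw.1]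
    omega
  have hsplit : S = ({p ∈ S | p.1 + p.2 = 0} ∪ {p ∈ S | 0 < p.1 + p.2}) ∪
      {p ∈ S | p.1 + p.2 < 0} := by
    ext p
    simp only [Set.mem_union, Set.mem_sep_iff]
    have := lt_trichotomy (p.1 + p.2) 0
    tauto
  have hcard := congrArg Set.ncard hsplit
  rw [Set.ncard_union_eq ?_ ((hfin.sep _).union (hfin.sep _)) (hfin.sep _),
    Set.ncard_union_eq ?_ (hfin.sep _) (hfin.sep _), hzero, hneg,
    Set.ncard_image_of_injective _ hflip.injective,
    Set.ncard_image_of_injective _ (fun a b h => by simpa using congrArg Prod.snd h)] at hcard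
  · have hS : invP w = S.ncard := rfl
    simp only [lenX, negCount]
    omega
  all_goals
    refine Set.disjoint_left.2 fun p hp hq => ?_
    simp only [Set.mem_union, Set.mem_sep_iff] at hp hq
    omega

lemma IsSgn.lenX_eq (hw : IsSgn w) (X : XType) :
    lenX X w = lenX XType.D w + if X = XType.D then 0 else negCount w := by
  have h := hw.invP_eq
  cases X <;> simp only [lenX, reduceCtorEq, if_true, if_false] at h ⊢ <;> omega

end Parity

section NegCount

variable {w : SPerm} {i k : ℤ}

lemma finite_setOf_pos_apply_neg (hw : {x | w x ≠ x}.Finite) :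
    {x | 0 < x ∧ w x < 0}.Finite :=
  hw.subset fun x hx => by
    simp only [Set.mem_ofPred_eq] at hx ⊢
    omega

lemma negCount_mul_tt_of_pos (hi : 0 < i) (hik : i < k) :
    negCount (w * tt i k) = negCount w := by
  have hpos : ∀ x, 0 < tt i k x ↔ 0 < x := fun x => by
    rcases eq_or_ne x i with rfl | hxi
    · rw [tt_apply_left hik (by omega) (by omega) hi.ne']; omega
    rcases eq_or_ne x k with rfl | hxk
    · rw [tt_apply_right hik (by omega) (by omega) hi.ne']; omega
    rcases eq_or_ne x (-i) with rfl | hxni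
    · rw [tt_apply_neg_left hik (by omega) (by omega) hi.ne']; omega
    rcases eq_or_ne x (-k) with rfl | hxnk
    · rw [tt_apply_neg_right hik (by omega) (by omega) hi.ne']; omega
    rw [tt_apply_of_ne hxi hxk hxni hxnk]
  have hset : {x | 0 < x ∧ (w * tt i k) x < 0} = tt i k '' {x | 0 < x ∧ w x < 0} := by
    rw [(tt_involutive i k).image_eq_preimage_symm]
    ext x
    simp only [Set.mem_ofPred_eq, Set.mem_preimage, Perm.mul_apply, hpos]
  rw [negCount, hset, Set.ncard_image_of_injective _ (tt i k).injective, negCount]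

lemma negCount_mul_tt_of_neg (hw : IsSgn w) (hi : i < 0) (hk : 0 < k) (hineg : i ≠ -k)
    (hlt : w i < w k) :
    negCount (w * tt i k) = negCount w + if w i < 0 ∧ 0 < w k then 2 else 0 := by
  have hik : i < k := by omega
  have hw0 := hw.map_zero
  have hwi : w i ≠ 0 := fun h => hi.ne (w.injective (h.trans hw0.symm))
  have hwk : w k ≠ 0 := fun h => hk.ne' (w.injective (h.trans hw0.symm))
  have hfin := finite_setOf_pos_apply_neg hw.2
  have hmem : ∀ x, (0 < x ∧ (w * tt i k) x < 0) ↔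
      (x = k ∧ w i < 0) ∨ (x = -i ∧ 0 < w k) ∨ (x ≠ k ∧ x ≠ -i ∧ 0 < x ∧ w x < 0) := by
    intro x
    rw [Perm.mul_apply]
    rcases eq_or_ne x k with rfl | hxk
    · rw [tt_apply_right hik hk hineg hi.ne]; omega
    rcases eq_or_ne x (-i) with rfl | hxi
    · rw [tt_apply_neg_left hik hk hineg hi.ne, hw.1]; omega
    rcases le_or_gt x 0 with hx | hx
    · omega
    · rw [tt_apply_of_ne (by omega) hxk hxi (by omega)]; omega
  split_ifs with hmix
  · have hset : {x | 0 < x ∧ (w * tt i k) x < 0} =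
        insert k (insert (-i) {x | 0 < x ∧ w x < 0}) := by
      ext x
      simp only [Set.mem_ofPred_eq, Set.mem_insert_iff, hmem]
      omega
    rw [negCount, hset, Set.ncard_insert_of_notMem _ (hfin.insert _),
      Set.ncard_insert_of_notMem _ hfin, negCount]
    · simp only [Set.mem_ofPred_eq, not_and, not_lt, hw.1]; omega
    · simp only [Set.mem_insert_iff, Set.mem_ofPred_eq, not_or, not_and, not_lt]; omega
  · have hset : {x | 0 < x ∧ (w * tt i k) x < 0} = {x | 0 < x ∧ w x < 0} := by
      ext x
      simp only [Set.mem_ofPred_eq, hmem]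
      rcases eq_or_ne x k with rfl | hxk
      · omega
      rcases eq_or_ne x (-i) with rfl | hxi
      · rw [hw.1]; omega
      · omega
    rw [negCount, hset, negCount, add_zero]

lemma negCount_mul_tt_zero (hw : IsSgn w) (hk : 0 < k) (hpos : 0 < w k) :
    negCount (w * tt 0 k) = negCount w + 1 := by
  have hset : {x | 0 < x ∧ (w * tt 0 k) x < 0} = insert k {x | 0 < x ∧ w x < 0} := by
    ext x
    simp only [Set.mem_ofPred_eq, Set.mem_insert_iff, Perm.mul_apply, tt_zero_left]
    rcases eq_or_ne x k with rfl | hxk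
    · rw [swap_apply_right, hw.1]; omega
    rcases le_or_gt x 0 with hx | hx
    · omega
    · rw [swap_apply_of_ne_of_ne (by omega) hxk]; omega
  rw [negCount, hset, Set.ncard_insert_of_notMem _ (finite_setOf_pos_apply_neg hw.2), negCount]
  simp only [Set.mem_ofPred_eq, not_and, not_lt]
  omega

end NegCount

section Length

variable {w : SPerm} {i k : ℤ} {X : XType}

/-- Via `t_{ik} = (i k)(-k -i)`. The sign changes grow (by two) only in the mixed case
`w i < 0 < w k`, and there `0` is a value in between for the second transposition. -/
theorem IsSgn.lenX_add_card_between_lt (hw : IsSgn w) (hik : i < k) (hk : 0 < k)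
    (hineg : i ≠ -k) (h0 : i ≠ 0) (hlt : w i < w k) (X : XType) :
    lenX X w + (between w i k).card < lenX X (w * tt i k) := by
  have hu : ∀ x, x ≠ i → x ≠ k → (w * swap i k) x = w x := fun x hxi hxk =>
    congrArg w (swap_apply_of_ne_of_ne hxi hxk)
  have hfac : w * tt i k = w * swap i k * swap (-k) (-i) := by
    rw [tt_eq_swap_mul_swap hik hk hineg h0, mul_assoc]
  have hfirst := invP_add_le_invP_mul_swap (invSet_finite hw.2) hik hlt
  have hsecond := invP_add_le_invP_mul_swap
    (invSet_finite (finite_support_mul hw.2 (finite_support_swap i k))) (by omega : -k < -i)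
    (by rw [hu (-k) hineg.symm (by omega), hu (-i) (by omega) (by omega), hw.1, hw.1]; omega)
  rw [← hfac] at hsecond
  have hwt := hw.mul (isSgn_tt i k)
  have hinv := hw.invP_eq
  have hinv' := hwt.invP_eq
  rw [hw.lenX_eq, hwt.lenX_eq]
  rcases lt_or_gt_of_ne h0 with hi | hi
  · rw [negCount_mul_tt_of_neg hw hi hk hineg hlt] at hinv' ⊢
    by_cases hmix : w i < 0 ∧ 0 < w k
    · have : 0 < (between (w * swap i k) (-k) (-i)).card := by
        refine Finset.card_pos.2 ⟨0, ?_⟩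
        simp only [between, Finset.mem_filter, Finset.mem_Ioo]
        rw [hu (-k) hineg.symm (by omega), hu (-i) (by omega) (by omega), hu 0 h0.symm hk.ne,
          hw.1, hw.1, hw.map_zero]
        omega
      split_ifs at hinv' ⊢ <;> omega
    · split_ifs at hinv' ⊢ <;> omega
  · rw [negCount_mul_tt_of_pos hi hik] at hinv' ⊢
    split_ifs <;> omega

theorem IsSgn.lenX_add_two_le_mul_tt_zero (hw : IsSgn w) (hk : 0 < k) (hpos : 0 < w k)
    (hX : X ≠ XType.D) :
    lenX X w + 2 ≤ lenX X (w * tt 0 k) := by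
  have hbound := invP_add_le_invP_mul_swap (invSet_finite hw.2) (by omega : -k < k)
    (by rw [hw.1]; omega)
  have hbetween : 0 < (between w (-k) k).card := by
    refine Finset.card_pos.2 ⟨0, ?_⟩
    simp only [between, Finset.mem_filter, Finset.mem_Ioo, hw.1, hw.map_zero]
    omega
  rw [← tt_zero_left] at hbound
  have hwt := hw.mul (isSgn_tt 0 k)
  have hinv := hw.invP_eq
  have hinv' := hwt.invP_eq
  rw [negCount_mul_tt_zero hw hk hpos] at hinv'
  rw [hw.lenX_eq, hwt.lenX_eq, if_neg hX, if_neg hX, negCount_mul_tt_zero hw hk hpos]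
  omega

theorem IsSgn.lenX_lt_lenX_mul_tt (hw : IsSgn w) (hik : i < k) (hk : 0 < k) (hineg : i ≠ -k)
    (hD : X = XType.D → i ≠ 0) (hlt : w i < w k) : lenX X w < lenX X (w * tt i k) := by
  by_cases h0 : i = 0
  · subst h0
    have := hw.lenX_add_two_le_mul_tt_zero hk (by rwa [hw.map_zero] at hlt)
      (fun h => hD h rfl)
    omega
  · exact (Nat.le_add_right _ _).trans_lt (hw.lenX_add_card_between_lt hik hk hineg h0 hlt X)

theorem IsSgn.lenX_mul_tt_lt_lenX (hw : IsSgn w) (hik : i < k) (hk : 0 < k) (hineg : i ≠ -k)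
    (hD : X = XType.D → i ≠ 0) (hgt : w k < w i) : lenX X (w * tt i k) < lenX X w := by
  have hlt : (w * tt i k) i < (w * tt i k) k := by
    by_cases h0 : i = 0
    · subst h0
      rw [Perm.mul_apply, Perm.mul_apply, tt_zero_left, swap_apply_right,
        swap_apply_of_ne_of_ne (by omega) (by omega), hw.1, hw.map_zero]
      rw [hw.map_zero] at hgt
      omega
    · rwa [Perm.mul_apply, Perm.mul_apply, tt_apply_left hik hk hineg h0,
        tt_apply_right hik hk hineg h0]
  simpa only [mul_assoc, tt_mul_self, mul_one] using
    (hw.mul (isSgn_tt i k)).lenX_lt_lenX_mul_tt hik hk hineg hD hlt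

theorem IsSgn.apply_lt_apply_of_lenX_lt_lenX_mul_tt (hw : IsSgn w) (hik : i < k) (hk : 0 < k)
    (hineg : i ≠ -k) (hD : X = XType.D → i ≠ 0) (hlen : lenX X w < lenX X (w * tt i k)) :
    w i < w k := by
  rcases lt_trichotomy (w i) (w k) with h | h | h
  · exact h
  · exact absurd (w.injective h) hik.ne
  · exact absurd (hw.lenX_mul_tt_lt_lenX hik hk hineg hD h) (by omega)

theorem IsSgn.ne_zero_of_lenX_mul_tt_eq_add_one (hw : IsSgn w) (hik : i < k) (hk : 0 < k)
    (hineg : i ≠ -k) (hD : X = XType.D → i ≠ 0) (hlen : lenX X (w * tt i k) = lenX X w + 1) :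
    i ≠ 0 := by
  rintro rfl
  have hlt := hw.apply_lt_apply_of_lenX_lt_lenX_mul_tt hik hk hineg hD (by omega)
  have := hw.lenX_add_two_le_mul_tt_zero hk (by rwa [hw.map_zero] at hlt) (fun h => hD h rfl)
  omega

theorem IsSgn.not_between_of_lenX_mul_tt_eq_add_one (hw : IsSgn w) (hik : i < k) (hk : 0 < k)
    (hineg : i ≠ -k) (hD : X = XType.D → i ≠ 0) (hlen : lenX X (w * tt i k) = lenX X w + 1)
    {j : ℤ} (hij : i < j) (hjk : j < k) : ¬(w i < w j ∧ w j < w k) := fun hj => by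
  have hlt := hw.apply_lt_apply_of_lenX_lt_lenX_mul_tt hik hk hineg hD (by omega)
  have h0 := hw.ne_zero_of_lenX_mul_tt_eq_add_one hik hk hineg hD hlen
  have hpos : 0 < (between w i k).card :=
    Finset.card_pos.2 ⟨j, Finset.mem_filter.2 ⟨Finset.mem_Ioo.2 ⟨hij, hjk⟩, hj⟩⟩
  have := hw.lenX_add_card_between_lt hik hk hineg h0 hlt X
  omega

end Length

section Consequences

variable {w : SPerm} {i k : ℤ}

lemma IsSgn.mul_tt_apply_cases (hw : IsSgn w) (hik : i < k) (hk : 0 < k) (hineg : i ≠ -k)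
    (h0 : i ≠ 0) (x : ℤ) :
    (x ≠ i ∧ x ≠ k ∧ x ≠ -i ∧ x ≠ -k ∧ (w * tt i k) x = w x) ∨
    (x = i ∧ (w * tt i k) x = w k ∧ w x = w i) ∨
    (x = k ∧ (w * tt i k) x = w i ∧ w x = w k) ∨
    (x = -i ∧ (w * tt i k) x = -w k ∧ w x = -w i) ∨
    (x = -k ∧ (w * tt i k) x = -w i ∧ w x = -w k) := by
  simp only [Perm.mul_apply]
  by_cases hxi : x = i
  · subst hxi
    exact Or.inr (Or.inl ⟨rfl, by rw [tt_apply_left hik hk hineg h0], rfl⟩)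
  by_cases hxk : x = k
  · subst hxk
    exact Or.inr (Or.inr (Or.inl ⟨rfl, by rw [tt_apply_right hik hk hineg h0], rfl⟩))
  by_cases hxni : x = -i
  · subst hxni
    exact Or.inr (Or.inr (Or.inr (Or.inl
      ⟨rfl, by rw [tt_apply_neg_left hik hk hineg h0, hw.1], hw.1 i⟩)))
  by_cases hxnk : x = -k
  · subst hxnk
    exact Or.inr (Or.inr (Or.inr (Or.inr
      ⟨rfl, by rw [tt_apply_neg_right hik hk hineg h0, hw.1], hw.1 k⟩)))
  exact Or.inl ⟨hxi, hxk, hxni, hxnk, congrArg w (tt_apply_of_ne hxi hxk hxni hxnk)⟩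

/-- Only the positions `±i`, `±k` move; next to them a new descent would put a value strictly
between `w i` and `w k` at the position `m + 1` or `-m`, which `hnb` excludes. -/
theorem IsSgn.desSet_mul_tt_subset {k : ℕ} (hw : IsSgn w) (hik : i < k) (hk : 0 < k)
    (hineg : i ≠ -k) (h0 : i ≠ 0) (hlt : w i < w k)
    (hnb : ∀ j, i < j → j < k → ¬(w i < w j ∧ w j < w k)) :
    DesSet (w * tt i k) ⊆ DesSet w ∪ {k - 1} := by
  rintro m ⟨hm0, hdes⟩
  by_cases hmk : m = k - 1
  · exact Or.inr hmk
  refine Or.inl ⟨hm0, ?_⟩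
  have hkZ : (0 : ℤ) < k := by exact_mod_cast hk
  have hcur := hw.mul_tt_apply_cases hik hkZ hineg h0 m
  have hnext := hw.mul_tt_apply_cases hik hkZ hineg h0 (m + 1)
  have hinj₁ : w (m + 1) ≠ w m := w.injective.ne (by omega)
  have hinj₂ : w m = -w i → (m : ℤ) = -i := fun h => w.injective (h.trans (hw.1 i).symm)
  have hneg := hw.1 m
  have hb₁ := hnb (m + 1)
  have hb₂ := hnb (-m)
  omega

lemma mul_tt_apply_of_lt_abs {M : ℤ} (hw : ∀ x, M < |x| → w x = x) (hi : |i| ≤ M)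
    (hk : |k| ≤ M) {x : ℤ} (hx : M < |x|) : (w * tt i k) x = x := by
  rw [abs_le] at hi hk
  rw [lt_abs] at hx
  rw [Perm.mul_apply, tt_apply_of_ne (by omega) (by omega) (by omega) (by omega)]
  exact hw x (lt_abs.2 hx)

lemma IsW.mul_tt {X : XType} (hw : IsW X w) (hik : i < k) (hk : 0 < k) (hineg : i ≠ -k)
    (hD : X = XType.D → i ≠ 0) (hlt : w i < w k) : IsW X (w * tt i k) := by
  have hsgn := hw.isSgn.mul (isSgn_tt i k)
  cases X with
  | B => exact hsgn
  | C => exact hsgn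
  | D =>
    refine ⟨hsgn, ?_⟩
    rcases lt_or_gt_of_ne (hD rfl) with hi | hi
    · rw [negCount_mul_tt_of_neg hw.1 hi hk hineg hlt]
      split_ifs
      exacts [hw.2.add even_two, hw.2]
    · rw [negCount_mul_tt_of_pos hi hik]
      exact hw.2

lemma neg_sub_one_le_of_forall_not_between {M : ℤ} (hw : ∀ x, M < |x| → w x = x)
    (hkM : |k| ≤ M) (hnb : ∀ j, i < j → j < k → ¬(w i < w j ∧ w j < w k)) :
    -M - 1 ≤ i := by
  by_contra! hi
  have hwk := abs_le.1 (abs_apply_le_of_forall_lt_abs hw hkM)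
  have hwi := hw i (by rw [abs_of_neg (by omega)]; omega)
  have hwj := hw (-M - 1) (by rw [abs_of_neg (by omega)]; omega)
  rw [abs_le] at hkM
  exact hnb (-M - 1) (by omega) (by omega) (by omega)

lemma IsSgn.lenX_mul_tt_lt_of_apply_eq_neg {X : XType} {M j : ℤ} (hw : IsSgn w)
    (hwin : ∀ x, M < |x| → w x = x) (hwk : w k = -M) (hkM : k ≤ M) (hMj : -M < j)
    (hjk : j < k) (hk : 0 < k) (hjneg : j ≠ -k) (hD : X = XType.D → j ≠ 0) :
    lenX X (w * tt j k) < lenX X w := by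
  have hwj :=
    abs_le.1 (abs_apply_le_of_forall_lt_abs hwin (x := j) (abs_le.2 ⟨hMj.le, by omega⟩))
  have hne : w j ≠ w k := w.injective.ne hjk.ne
  exact hw.lenX_mul_tt_lt_lenX hjk hk hjneg hD (by omega)

end Consequences

theorem reflection_length_lemma_general (X : XType) (n : ℕ)
    (w : SPerm) (hw : IsWn X n w) (i : ℤ) (k : ℕ)
    (hik : i < (k : ℤ)) (hk1 : 1 ≤ k) (hkn : k ≤ n)
    (hrefl : i ≠ -(k : ℤ) ∧ (X = XType.D → i ≠ 0))
    (hlen : lenX X (w * tt i (k : ℤ)) = lenX X w + 1) :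
    IsWn X (n + 1) (w * tt i (k : ℤ)) ∧
    (w * tt i (k : ℤ)) (k : ℤ) < w (k : ℤ) ∧
    DesSet (w * tt i (k : ℤ)) ⊆ DesSet w ∪ {k - 1} ∧
    (¬ IsWn X n (w * tt i (k : ℤ)) →
      i = -(n : ℤ) - 1 ∧
      ∀ j : ℤ, i < j → j < (k : ℤ) → j ≠ -(k : ℤ) → (X = XType.D → j ≠ 0) →
        lenX X (w * tt i (k : ℤ) * tt j (k : ℤ)) ≠
          lenX X (w * tt i (k : ℤ)) + 1) := by
  obtain ⟨hineg, hD⟩ := hrefl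
  have hk : (0 : ℤ) < k := by omega
  have hkn' : |(k : ℤ)| ≤ n := by rw [abs_of_pos hk]; omega
  have hsgn := hw.1.isSgn
  have hlt := hsgn.apply_lt_apply_of_lenX_lt_lenX_mul_tt hik hk hineg hD (by omega)
  have h0 := hsgn.ne_zero_of_lenX_mul_tt_eq_add_one hik hk hineg hD hlen
  have hnb := fun j => hsgn.not_between_of_lenX_mul_tt_eq_add_one hik hk hineg hD hlen (j := j)
  have hi := neg_sub_one_le_of_forall_not_between hw.2 hkn' hnb
  have hwt := hw.1.mul_tt hik hk hineg hD hlt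
  have hwin : ∀ x, (n : ℤ) + 1 < |x| → (w * tt i k) x = x := fun x hx =>
    mul_tt_apply_of_lt_abs (fun y hy => hw.2 y (by omega)) (by rw [abs_le]; omega)
      (by omega) hx
  refine ⟨⟨hwt, fun x hx => hwin x (by exact_mod_cast hx)⟩,
    by rwa [Perm.mul_apply, tt_apply_right hik hk hineg h0],
    hsgn.desSet_mul_tt_subset hik (by omega) hineg h0 hlt hnb, fun hnot => ?_⟩
  have hieq : i = -(n : ℤ) - 1 := by
    by_contra hne
    exact hnot ⟨hwt, fun x hx => mul_tt_apply_of_lt_abs hw.2 (by rw [abs_le]; omega) hkn' hx⟩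
  have hwtk : (w * tt i k) k = -((n : ℤ) + 1) := by
    rw [Perm.mul_apply, tt_apply_right hik hk hineg h0,
      hw.2 i (by rw [abs_of_neg (by omega)]; omega), hieq]
    ring
  exact ⟨hieq, fun j hij hjk hjneg hjD => Nat.ne_of_lt (Nat.lt_succ_of_lt
    ((hsgn.mul (isSgn_tt i k)).lenX_mul_tt_lt_of_apply_eq_neg hwin hwtk (by omega) (by omega)
      hjk hk hjneg hjD))⟩

/-- Technical lemma on length-increasing reflections:
if `w ∈ W^X_n`, `i < k ≤ n`, `t = t_{ik}` is a reflection with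
`ℓ^X(wt) = ℓ^X(w)+1`, then `wt ∈ W^X_{n+1}`, `wt(k) < w(k)`,
`Des(wt) ⊆ Des(w) ∪ {k-1}`, and when `wt ∉ W^X_n` one has `i = -n-1` and no
further length-increasing reflection `t_{jk}` with `i < j < k` exists. -/
theorem reflection_length_lemma (X : XType) (n : ℕ) (hn : 0 < n)
    (w : SPerm) (hw : IsWn X n w) (i : ℤ) (k : ℕ)
    (hik : i < (k : ℤ)) (hk1 : 1 ≤ k) (hkn : k ≤ n)
    (hrefl : i ≠ -(k : ℤ) ∧ (X = XType.D → i ≠ 0))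
    (hlen : lenX X (w * tt i (k : ℤ)) = lenX X w + 1) :
    IsWn X (n + 1) (w * tt i (k : ℤ)) ∧
    (w * tt i (k : ℤ)) (k : ℤ) < w (k : ℤ) ∧
    DesSet (w * tt i (k : ℤ)) ⊆ DesSet w ∪ {k - 1} ∧
    (¬ IsWn X n (w * tt i (k : ℤ)) →
      i = -(n : ℤ) - 1 ∧
      ∀ j : ℤ, i < j → j < (k : ℤ) → j ≠ -(k : ℤ) → (X = XType.D → j ≠ 0) →
        lenX X (w * tt i (k : ℤ) * tt j (k : ℤ)) ≠
          lenX X (w * tt i (k : ℤ)) + 1) :=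
  reflection_length_lemma_general X n w hw i k hik hk1 hkn hrefl hlen
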